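/- Let Q be a unital quantale and X a set. If 𝔽 is a Q-filter on the set F_Q(X) of all Q-filters on X, then the map σ(𝔽) : Q^X → Q defined by σ(𝔽)(λ) = 𝔽(λ̂), where λ̂(F) = F(λ), is a Q-filter on X. -/

import Mathlib

/-- Left implication in a unital quantale: `ldd r q = r ⧸ q`. -/
def ldd {Q : Type*} [Monoid Q] [CompleteLattice Q] (r q : Q) : Q := sSup {p | p * q ≤ r}

/-- Right implication in a unital quantale: `rdd p r = p ⧹ r`. -/
def rdd {Q : Type*} [Monoid Q] [CompleteLattice Q] (p r : Q) : Q := sSup {q | p * q ≤ r}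

/-- Image of a `Q`-valued map along `f`. -/
noncomputable def fim {X Y : Type*} {Q : Type*} [CompleteLattice Q] (f : X → Y) (α : X → Q) :
    Y → Q := fun y => ⨆ x ∈ f ⁻¹' {y}, α x


/-- A \`Q\`-filter on a set \`X\`. -/
structure IsQFilter {X : Type*} {Q : Type*} [Monoid Q] [CompleteLattice Q]
    (F : (X → Q) → Q) : Prop where
  f1 : (1 : Q) ≤ F (fun _ => 1)
  f2 : ∀ lam γ : X → Q, F lam ⊓ F γ ≤ F (lam ⊓ γ)
  f3 : ∀ lam γ : X → Q, (⨅ x, ldd (γ x) (lam x)) ≤ ldd (F γ) (F lam)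
  f4 : ∀ r : Q, F (fun _ => r) ≤ r

/-! A `Q`-filter is monotone: for `λ ≤ γ`, (F3) gives `k ≤ ⋀ₓ γ x ⧸ λ x ≤ F γ ⧸ F λ`. Each axiom
for `σ 𝔽` then comes from the same axiom for every `F`, transported through `𝔽` by monotonicity;
for (F3) the infimum over the filters `F` is bounded below by the infimum over the points `x`. -/

open Quantale

lemma le_ldd_iff {Q : Type*} [Monoid Q] [CompleteLattice Q] [IsQuantale Q] {p r q : Q} :
    p ≤ ldd r q ↔ p * q ≤ r :=
  leftMulResiduation_le_iff_mul_le

lemma IsQFilter.mono {X Q : Type*} [Monoid Q] [CompleteLattice Q] [IsQuantale Q]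
    {F : (X → Q) → Q} (hF : IsQFilter F) : Monotone F := by
  intro lam γ h
  have hunit : (1 : Q) ≤ ldd (F γ) (F lam) :=
    (le_iInf fun x => le_ldd_iff.2 ((one_mul (lam x)).trans_le (h x))).trans (hF.f3 lam γ)
  simpa only [one_mul] using le_ldd_iff.1 hunit

theorem diagonal_QFilter {X : Type*} {Q : Type*} [Monoid Q] [CompleteLattice Q]
    [IsQuantale Q]
    (FF : ({F : (X → Q) → Q // IsQFilter F} → Q) → Q) (hFF : IsQFilter FF) :
    IsQFilter (fun lam : X → Q => FF (fun F => F.1 lam)) := by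
  constructor
  · exact hFF.f1.trans (hFF.mono fun F => F.2.f1)
  · exact fun lam γ => (hFF.f2 _ _).trans (hFF.mono fun F => F.2.f2 lam γ)
  · exact fun lam γ => (le_iInf fun F => F.2.f3 lam γ).trans (hFF.f3 _ _)
  · exact fun r => (hFF.mono fun F => F.2.f4 r).trans (hFF.f4 r)
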